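/- arXiv:1708.06028 — 2 statements merged into one kernel-verified Lean document; each statement's English description precedes it below -/
import Mathlib

section
/- (Lemma) The tanh-sinh transformation ψ(z) = tanh((π/2)·sinh z) is Lipschitz continuous on the strip D_d whenever 0 < d < π/2: there exists a constant L > 0 such that |ψ(z) − ψ(w)| ≤ L·|z − w| for all z, w with |Im z| < d and |Im w| < d. -/
/-!
On a closed strip `|Im z| ≤ d < π/2` the derivative
`ψ'(z) = (π/2) cosh z / cosh² ((π/2) sinh z)` is bounded, after which the mean value inequality on
the convex strip gives the Lipschitz bound. The denominator never vanishes, since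
`|cosh w|² = sinh² (Re w) + cos² (Im w)`, so `|ψ'|` is bounded on the compact part `|Re z| ≤ 1`.
For `|Re z| ≥ 1` the denominator is at least `(Re w)² = ((π/2) sinh (Re z) cos (Im z))²`, which
outgrows the numerator `(π/2) |cosh z| ≤ π |sinh (Re z)|`, so `|ψ'(z)| ≤ 4 / (π cos² d)` there.
-/

open Real Complex

namespace Complex

lemma cosh_eq_re_im (z : ℂ) :
    cosh z = (Real.cosh z.re * Real.cos z.im : ℝ) + (Real.sinh z.re * Real.sin z.im : ℝ) * I := by
  conv_lhs => rw [← re_add_im z]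
  rw [cosh_add, cosh_mul_I, sinh_mul_I]
  push_cast
  ring

lemma sinh_eq_re_im (z : ℂ) :
    sinh z = (Real.sinh z.re * Real.cos z.im : ℝ) + (Real.cosh z.re * Real.sin z.im : ℝ) * I := by
  conv_lhs => rw [← re_add_im z]
  rw [sinh_add, cosh_mul_I, sinh_mul_I]
  push_cast
  ring

lemma norm_cosh_sq (z : ℂ) : ‖cosh z‖ ^ 2 = Real.sinh z.re ^ 2 + Real.cos z.im ^ 2 := by
  rw [cosh_eq_re_im, norm_add_mul_I, sq_sqrt (by positivity)]
  linear_combination Real.cos z.im ^ 2 * Real.cosh_sq z.re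
    + Real.sinh z.re ^ 2 * Real.sin_sq_add_cos_sq z.im

lemma abs_sinh_re_le_norm_cosh (z : ℂ) : |Real.sinh z.re| ≤ ‖cosh z‖ :=
  abs_le_of_sq_le_sq (by nlinarith [norm_cosh_sq z]) (norm_nonneg _)

lemma norm_cosh_le_cosh_re (z : ℂ) : ‖cosh z‖ ≤ Real.cosh z.re :=
  le_of_sq_le_sq (by nlinarith [norm_cosh_sq z, Real.cosh_sq z.re, Real.cos_sq_le_one z.im])
    (Real.cosh_pos _).le

lemma hasDerivAt_tanh {z : ℂ} (hz : cosh z ≠ 0) : HasDerivAt tanh (1 / cosh z ^ 2) z := by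
  have h := (hasDerivAt_sinh z).div (hasDerivAt_cosh z) hz
  rwa [show sinh / cosh = tanh from funext fun x => (tanh_eq_sinh_div_cosh x).symm,
    ← sq, ← sq, cosh_sq_sub_sinh_sq] at h

end Complex

lemma Real.abs_le_abs_sinh (x : ℝ) : |x| ≤ |Real.sinh x| := by
  rw [Real.abs_sinh]
  exact Real.self_le_sinh_iff.2 (abs_nonneg x)

lemma Real.cos_le_cos_of_abs_le {x d : ℝ} (h : |x| ≤ d) (hd : d ≤ π) :
    Real.cos d ≤ Real.cos x := by
  rw [← Real.cos_abs x]
  exact Real.cos_le_cos_of_nonneg_of_le_pi (abs_nonneg x) hd h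

noncomputable def tanhSinh (z : ℂ) : ℂ := tanh ((π / 2 : ℂ) * sinh z)

noncomputable def tanhSinhDeriv (z : ℂ) : ℂ :=
  (π / 2 : ℂ) * cosh z / cosh ((π / 2 : ℂ) * sinh z) ^ 2

lemma re_half_pi_mul_sinh (z : ℂ) :
    ((π / 2 : ℂ) * sinh z).re = π / 2 * (Real.sinh z.re * Real.cos z.im) := by
  rw [sinh_eq_re_im]; simp [-ofReal_sinh, -ofReal_cosh, -ofReal_sin, -ofReal_cos]

lemma im_half_pi_mul_sinh (z : ℂ) :
    ((π / 2 : ℂ) * sinh z).im = π / 2 * (Real.cosh z.re * Real.sin z.im) := by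
  rw [sinh_eq_re_im]; simp [-ofReal_sinh, -ofReal_cosh, -ofReal_sin, -ofReal_cos]

lemma norm_tanhSinhDeriv (z : ℂ) :
    ‖tanhSinhDeriv z‖ = π / 2 * ‖cosh z‖ / ‖cosh ((π / 2 : ℂ) * sinh z)‖ ^ 2 := by
  simp [tanhSinhDeriv, abs_of_pos pi_pos]

lemma cosh_half_pi_mul_sinh_ne_zero {z : ℂ} (hz : |z.im| < π / 2) :
    cosh ((π / 2 : ℂ) * sinh z) ≠ 0 := by
  set w := (π / 2 : ℂ) * sinh z
  have hcos : 0 < Real.cos z.im := Real.cos_pos_of_mem_Ioo (abs_lt.1 hz)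
  intro hw
  have hsq := norm_cosh_sq w
  rw [hw, norm_zero] at hsq
  have hre : w.re = 0 := Real.sinh_eq_zero.1 (by nlinarith [sq_nonneg (Real.cos w.im)])
  have hcos_w : Real.cos w.im = 0 := by nlinarith [sq_nonneg (Real.sinh w.re)]
  have hx : z.re = 0 := by
    rw [re_half_pi_mul_sinh] at hre
    simpa [pi_ne_zero, hcos.ne'] using hre
  -- on the imaginary axis `w = i (π/2) sin (Im z)`, which stays inside `|Im w| < π/2`
  have hsin : |Real.sin z.im| < 1 := by
    rw [← sq_lt_one_iff_abs_lt_one]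
    nlinarith [Real.sin_sq_add_cos_sq z.im]
  have him : |w.im| < π / 2 := by
    rw [im_half_pi_mul_sinh, hx, Real.cosh_zero, one_mul, abs_mul, abs_of_pos (by positivity)]
    nlinarith [pi_pos]
  exact (Real.cos_pos_of_mem_Ioo (abs_lt.1 him)).ne' hcos_w

lemma hasDerivAt_tanhSinh {z : ℂ} (hz : |z.im| < π / 2) :
    HasDerivAt tanhSinh (tanhSinhDeriv z) z := by
  have h := (hasDerivAt_tanh (cosh_half_pi_mul_sinh_ne_zero hz)).comp z
    ((hasDerivAt_sinh z).const_mul (π / 2 : ℂ))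
  exact (h : HasDerivAt tanhSinh _ z).congr_deriv (by rw [tanhSinhDeriv]; ring)

lemma norm_tanhSinhDeriv_le_of_one_le_abs_re {z : ℂ} (hz : |z.im| < π / 2)
    (hx : 1 ≤ |z.re|) : ‖tanhSinhDeriv z‖ ≤ 4 / (π * Real.cos z.im ^ 2) := by
  set s := |Real.sinh z.re|
  set c := Real.cos z.im
  have hc : 0 < c := Real.cos_pos_of_mem_Ioo (abs_lt.1 hz)
  have hs : 1 ≤ s := hx.trans (Real.abs_le_abs_sinh _)
  have hnum : ‖cosh z‖ ≤ 2 * s := by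
    refine (norm_cosh_le_cosh_re z).trans (le_of_sq_le_sq ?_ (by positivity))
    nlinarith [Real.cosh_sq z.re, sq_abs (Real.sinh z.re)]
  have hden : π / 2 * s * c ≤ ‖cosh ((π / 2 : ℂ) * sinh z)‖ := by
    refine le_trans (le_of_eq ?_) ((Real.abs_le_abs_sinh _).trans (abs_sinh_re_le_norm_cosh _))
    rw [re_half_pi_mul_sinh, abs_mul, abs_mul, abs_of_pos (by positivity), abs_of_pos hc]
    ring
  rw [norm_tanhSinhDeriv]
  calc π / 2 * ‖cosh z‖ / ‖cosh ((π / 2 : ℂ) * sinh z)‖ ^ 2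
      ≤ π / 2 * (2 * s) / (π / 2 * s * c) ^ 2 := by gcongr
    _ = 4 / (π * c ^ 2) / s := by field_simp; ring
    _ ≤ 4 / (π * c ^ 2) := div_le_self (by positivity) hs

lemma continuousOn_tanhSinhDeriv :
    ContinuousOn tanhSinhDeriv {z : ℂ | |z.im| < π / 2} := by
  refine ContinuousOn.div (by fun_prop) (by fun_prop) fun z hz => ?_
  exact pow_ne_zero 2 (cosh_half_pi_mul_sinh_ne_zero hz)

lemma exists_norm_tanhSinhDeriv_le {d : ℝ} (hd : d < π / 2) :
    ∃ C, ∀ z : ℂ, |z.im| ≤ d → ‖tanhSinhDeriv z‖ ≤ C := by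
  have hK : IsCompact (Set.Icc (-1) 1 ×ℂ Set.Icc (-d) d) := isCompact_Icc.reProdIm isCompact_Icc
  obtain ⟨C, hC⟩ := hK.exists_bound_of_continuousOn <|
    continuousOn_tanhSinhDeriv.mono fun z hz => (abs_le.2 (mem_reProdIm.1 hz).2).trans_lt hd
  refine ⟨max C (4 / (π * Real.cos d ^ 2)), fun z hz => ?_⟩
  rcases le_or_gt |z.re| 1 with hx | hx
  · exact (hC z (mem_reProdIm.2 ⟨abs_le.1 hx, abs_le.1 hz⟩)).trans (le_max_left _ _)
  · have hz' : |z.im| < π / 2 := hz.trans_lt hd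
    have hcos : Real.cos d ≤ Real.cos z.im := Real.cos_le_cos_of_abs_le hz (by linarith [pi_pos])
    have hcos_d : 0 < Real.cos d := Real.cos_pos_of_mem_Ioo ⟨by linarith [abs_nonneg z.im], hd⟩
    calc ‖tanhSinhDeriv z‖ ≤ 4 / (π * Real.cos z.im ^ 2) :=
          norm_tanhSinhDeriv_le_of_one_le_abs_re hz' hx.le
      _ ≤ 4 / (π * Real.cos d ^ 2) := by gcongr
      _ ≤ _ := le_max_right _ _

lemma convex_setOf_abs_im_le (d : ℝ) : Convex ℝ {z : ℂ | |z.im| ≤ d} := by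
  simpa only [Set.preimage, Set.mem_Icc, ← abs_le, imLm_coe] using
    (convex_Icc (-d) d).linear_preimage imLm

theorem tanh_sinh_lipschitz_on_strip_general (d : ℝ) (hd : d < π / 2) :
    ∃ L : ℝ, 0 < L ∧ ∀ z w : ℂ, |z.im| < d → |w.im| < d →
      ‖Complex.tanh ((π / 2 : ℂ) * Complex.sinh z)
          - Complex.tanh ((π / 2 : ℂ) * Complex.sinh w)‖
        ≤ L * ‖z - w‖ := by
  obtain ⟨C, hC⟩ := exists_norm_tanhSinhDeriv_le hd
  refine ⟨max C 1, lt_max_of_lt_right one_pos, fun z w hz hw => ?_⟩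
  exact (convex_setOf_abs_im_le d).norm_image_sub_le_of_norm_hasDerivWithin_le
    (fun x hx => (hasDerivAt_tanhSinh (lt_of_le_of_lt hx hd)).hasDerivWithinAt)
    (fun x hx => (hC x hx).trans (le_max_left _ _)) hw.le hz.le

/-- The tanh-sinh transformation `ψ(z) = tanh((π/2)·sinh z)` is Lipschitz on the strip
`D_d = {z : |Im z| < d}` whenever `0 < d < π/2`. -/
theorem tanh_sinh_lipschitz_on_strip (d : ℝ) (hd0 : 0 < d) (hd : d < π / 2) :
    ∃ L : ℝ, 0 < L ∧ ∀ z w : ℂ, |z.im| < d → |w.im| < d →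
      ‖Complex.tanh ((π / 2 : ℂ) * Complex.sinh z)
          - Complex.tanh ((π / 2 : ℂ) * Complex.sinh w)‖
        ≤ L * ‖z - w‖ :=
  tanh_sinh_lipschitz_on_strip_general d hd
end

section
/- For the integral I₁, the preimages of the excluded singularities are bounded away from the real axis: let 0 < h < k be real parameters and let F = {−3, 2k/h − 1, −2k/h − 1} ⊂ ℂ (each of these points of the transformed integrand's singular set lies outside [−1, 1] since k > h > 0). Then for any d₀ with 0 < d₀ < π/2, the set S = {z ∈ D_{d₀} : ψ(z) ∈ F} satisfies inf{|Im z| : z ∈ S} > 0. -/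
/-
If `tanh w = v` for a real `v` with `1 < |v|`, then `exp (2w) = (1 + v) / (1 - v)` is a negative
real number, so `Re w = log ((v + 1) / (v - 1)) / 2` and `Im w` is an odd multiple of `π / 2`.
For `w = (π / 2) sinh z` with `z = x + iy` this makes `|sinh x · cos y|` a constant depending only
on `v`, while `|cosh x · sin y| ≥ 1`. In the strip `cos y ≥ cos d₀ > 0`, which bounds `|sinh x|`
and hence `cosh x`, and then `|y| ≥ |sin y| ≥ 1 / cosh x` is bounded below.
-/

open Real Complex

namespace Complex

theorem sinh_re (z : ℂ) : (sinh z).re = Real.sinh z.re * Real.cos z.im := by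
  rw [← re_add_im z, sinh_add, sinh_mul_I, cosh_mul_I]
  simp [sinh_ofReal_re, cosh_ofReal_re, cos_ofReal_re, sin_ofReal_re]

theorem sinh_im (z : ℂ) : (sinh z).im = Real.cosh z.re * Real.sin z.im := by
  rw [← re_add_im z, sinh_add, sinh_mul_I, cosh_mul_I]
  simp [sinh_ofReal_re, cosh_ofReal_re, cos_ofReal_re, sin_ofReal_re]

theorem exp_two_mul_of_tanh_eq {w v : ℂ} (h : tanh w = v) (hv₀ : v ≠ 0) (hv₁ : v ≠ 1) :
    exp (2 * w) = (1 + v) / (1 - v) := by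
  have hcosh : cosh w ≠ 0 := fun h0 ↦ hv₀ (by rw [← h, tanh_eq_sinh_div_cosh, h0, div_zero])
  rw [tanh_eq_sinh_div_cosh, div_eq_iff hcosh, sinh, cosh] at h
  have hexp : exp (2 * w) = exp w * exp w := by rw [two_mul, exp_add]
  have hinv : exp (-w) * exp w = 1 := by rw [← exp_add, neg_add_cancel, exp_zero]
  rw [eq_div_iff (sub_ne_zero.mpr hv₁.symm), hexp]
  linear_combination 2 * exp w * h + (1 + v) * hinv

theorem exists_int_eq_of_tanh_eq_ofReal {w : ℂ} {v : ℝ} (hv : 1 < |v|) (h : tanh w = v) :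
    ∃ n : ℤ, w = Real.log ((v + 1) / (v - 1)) / 2 + (2 * n + 1) * (π / 2) * I := by
  have hv₀ : v ≠ 0 := by rintro rfl; norm_num at hv
  have hv₁ : v ≠ 1 := by rintro rfl; norm_num at hv
  have hr : 0 < (v + 1) / (v - 1) := by
    rcases lt_abs.mp hv with hv | hv
    · exact div_pos (by linarith) (by linarith)
    · exact div_pos_of_neg_of_neg (by linarith) (by linarith)
  have hexp : exp (2 * w) = exp (Real.log ((v + 1) / (v - 1)) + π * I) := by
    rw [exp_two_mul_of_tanh_eq h (ofReal_ne_zero.mpr hv₀) (by exact_mod_cast hv₁), exp_add,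
      exp_pi_mul_I, ← ofReal_exp, Real.exp_log hr]
    have : (v : ℂ) - 1 ≠ 0 := sub_ne_zero.mpr (by exact_mod_cast hv₁)
    have : (1 : ℂ) - v ≠ 0 := sub_ne_zero.mpr (by exact_mod_cast hv₁.symm)
    push_cast
    field_simp
    ring
  obtain ⟨n, hn⟩ := exp_eq_exp_iff_exists_int.mp hexp
  exact ⟨n, by linear_combination hn / 2⟩

end Complex

theorem Real.div_le_abs_of_abs_sinh_mul_cos_le {x y d m : ℝ} (hd : d < π / 2) (hy : |y| < d)
    (hre : |sinh x * cos y| ≤ m) (him : 1 ≤ |cosh x * sin y|) :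
    cos d / (cos d + m) ≤ |y| := by
  have hcos_le : cos d ≤ cos y := by
    rw [← cos_abs y]
    exact cos_le_cos_of_nonneg_of_le_pi (abs_nonneg y) (by linarith [pi_pos]) hy.le
  have hcos_pos : 0 < cos d := cos_pos_of_mem_Ioo ⟨by linarith [abs_nonneg y, pi_pos], hd⟩
  have hsinh : |sinh x| * cos d ≤ m := by
    calc |sinh x| * cos d ≤ |sinh x| * cos y := by gcongr
      _ = |sinh x * cos y| := by rw [abs_mul, abs_of_pos (hcos_pos.trans_le hcos_le)]
      _ ≤ m := hre
  have hcosh : cosh x ≤ 1 + |sinh x| := by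
    nlinarith [cosh_sq x, sq_abs (sinh x), cosh_pos x, abs_nonneg (sinh x)]
  have hm : 0 ≤ m := (abs_nonneg _).trans hre
  rw [div_le_iff₀ (by positivity)]
  calc cos d ≤ cos d * (cosh x * |sin y|) := by
        rw [abs_mul, abs_of_pos (cosh_pos x)] at him; nlinarith
    _ ≤ cos d * ((1 + |sinh x|) * |y|) := by
        have hsin : |sin y| ≤ |y| := abs_sin_le_abs
        exact mul_le_mul_of_nonneg_left (mul_le_mul hcosh hsin (abs_nonneg _) (by positivity))
          hcos_pos.le
    _ ≤ |y| * (cos d + m) := by nlinarith [abs_nonneg y]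

theorem exists_pos_le_abs_im_of_tanh_sinh_eq {v d₀ : ℝ} (hv : 1 < |v|) (hd₀0 : 0 < d₀)
    (hd₀ : d₀ < π / 2) :
    ∃ c : ℝ, 0 < c ∧ ∀ z : ℂ, |z.im| < d₀ →
      Complex.tanh ((π / 2 : ℂ) * Complex.sinh z) = v → c ≤ |z.im| := by
  set m := |Real.log ((v + 1) / (v - 1))| / π
  have hcos : 0 < Real.cos d₀ := cos_pos_of_mem_Ioo ⟨by linarith, hd₀⟩
  refine ⟨Real.cos d₀ / (Real.cos d₀ + m), by positivity, fun z hz h ↦ ?_⟩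
  obtain ⟨n, hn⟩ := Complex.exists_int_eq_of_tanh_eq_ofReal hv h
  have hsinh : sinh z = (Real.log ((v + 1) / (v - 1)) / π : ℝ) + (2 * n + 1 : ℤ) * I := by
    have hπ : (π : ℂ) ≠ 0 := ofReal_ne_zero.mpr pi_ne_zero
    apply mul_left_cancel₀ (div_ne_zero hπ two_ne_zero)
    push_cast
    field_simp
    linear_combination 2 * hn
  have hre : Real.sinh z.re * Real.cos z.im = Real.log ((v + 1) / (v - 1)) / π := by
    rw [← Complex.sinh_re, hsinh]; simp
  have him : Real.cosh z.re * Real.sin z.im = 2 * n + 1 := by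
    rw [← Complex.sinh_im, hsinh]; simp
  refine Real.div_le_abs_of_abs_sinh_mul_cos_le (x := z.re) hd₀ hz ?_ ?_
  · rw [hre, abs_div, abs_of_pos pi_pos]
  · rw [him]
    exact_mod_cast Int.one_le_abs (by omega : 2 * n + 1 ≠ 0)

/-- For the integral `I₁` with parameters `0 < h < k`, the preimages under the tanh-sinh map
`ψ(z) = tanh((π/2)·sinh z)` of the excluded singularities `−3`, `2k/h − 1`, `−2k/h − 1`
(each lying outside `[−1, 1]` since `k > h > 0`) inside the strip `D_{d₀}` are bounded away
from the real axis. -/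
theorem tanh_sinh_I1_singularities_bounded_away (h k : ℝ) (hh : 0 < h) (hk : h < k)
    (d₀ : ℝ) (hd₀0 : 0 < d₀) (hd₀ : d₀ < π / 2) :
    ∃ c : ℝ, 0 < c ∧ ∀ z : ℂ, |z.im| < d₀ →
      Complex.tanh ((π / 2 : ℂ) * Complex.sinh z)
          ∈ ({(-3 : ℂ), ((2 * k / h - 1 : ℝ) : ℂ), ((-(2 * k / h) - 1 : ℝ) : ℂ)} : Set ℂ) →
        c ≤ |z.im| := by
  have hkh : 2 < 2 * k / h := by rw [lt_div_iff₀ hh]; linarith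
  obtain ⟨c₁, hc₁, h₁⟩ := exists_pos_le_abs_im_of_tanh_sinh_eq (v := -3) (by norm_num) hd₀0 hd₀
  obtain ⟨c₂, hc₂, h₂⟩ := exists_pos_le_abs_im_of_tanh_sinh_eq (v := 2 * k / h - 1)
    (lt_abs.mpr (.inl (by linarith))) hd₀0 hd₀
  obtain ⟨c₃, hc₃, h₃⟩ := exists_pos_le_abs_im_of_tanh_sinh_eq (v := -(2 * k / h) - 1)
    (lt_abs.mpr (.inr (by linarith))) hd₀0 hd₀
  refine ⟨min c₁ (min c₂ c₃), by positivity, ?_⟩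
  rintro z hz (hψ | hψ | hψ)
  · exact (min_le_left _ _).trans (h₁ z hz (by rw [hψ]; push_cast; rfl))
  · exact (min_le_right _ _).trans <| (min_le_left _ _).trans (h₂ z hz hψ)
  · exact (min_le_right _ _).trans <| (min_le_right _ _).trans (h₃ z hz hψ)
end
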